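/- Consider a time-varying formation G(p(t)) in ℝ^d where the undirected graph G is acyclic and has a spanning tree (i.e., G is a tree, so m = n − 1), all edge vectors are nonzero, with bearings g_k(t) and bearing Laplacian L_B(t). Then the formation is bearing persistently exciting (there exist T > 0 and μ > 0 with ∫_t^{t+T} L_B(τ) dτ ≥ μ H̄ᵀH̄ for all t) if and only if every bearing g_k(t), k ∈ {1,…,n−1}, is persistently exciting. -/

import Mathlib

open MeasureTheory Matrix
open scoped Kronecker

/-- The projection operator `π_y = I_d - y yᵀ`. -/
noncomputable def proj {d : ℕ} (y : Fin d → ℝ) : Matrix (Fin d) (Fin d) ℝ :=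
  1 - Matrix.vecMulVec y y

/-- `H` is the incidence matrix of an oriented graph. -/
def IsIncidence {m n : ℕ} (H : Matrix (Fin m) (Fin n) ℝ) : Prop :=
  ∃ head tail : Fin m → Fin n, (∀ k, head k ≠ tail k) ∧
    ∀ k i, H k i = if i = head k then 1 else if i = tail k then -1 else 0

/-- `H̄ = H ⊗ I_d`. -/
noncomputable def Hbar {m n : ℕ} (d : ℕ) (H : Matrix (Fin m) (Fin n) ℝ) :
    Matrix (Fin m × Fin d) (Fin n × Fin d) ℝ :=
  H ⊗ₖ (1 : Matrix (Fin d) (Fin d) ℝ)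

/-- `Π = blkdiag(π_{g_1}, …, π_{g_m})`. -/
noncomputable def blkProj {m d : ℕ} (g : Fin m → Fin d → ℝ) :
    Matrix (Fin m × Fin d) (Fin m × Fin d) ℝ :=
  Matrix.of fun p q => if p.1 = q.1 then proj (g p.1) p.2 q.2 else 0

/-- Euclidean norm of a vector in `ℝ^d` given as `Fin d → ℝ`. -/
noncomputable def enorm {d : ℕ} (v : Fin d → ℝ) : ℝ := Real.sqrt (v ⬝ᵥ v)

/-- The bearing (unit vector) of a nonzero vector. -/
noncomputable def bearingOf {d : ℕ} (v : Fin d → ℝ) : Fin d → ℝ := (_root_.enorm v)⁻¹ • v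

/-- The `k`-th edge vector `e_k = (H̄ p)_k ∈ ℝ^d` of a configuration `p`. -/
noncomputable def edgeVec {m n d : ℕ} (H : Matrix (Fin m) (Fin n) ℝ)
    (p : Fin n × Fin d → ℝ) (k : Fin m) : Fin d → ℝ :=
  fun i => (Hbar d H).mulVec p (k, i)

/-- The bearing Laplacian `L_B = H̄ᵀ Π H̄` of a configuration `p`. -/
noncomputable def LB {m n : ℕ} {d : ℕ} (H : Matrix (Fin m) (Fin n) ℝ)
    (p : Fin n × Fin d → ℝ) : Matrix (Fin n × Fin d) (Fin n × Fin d) ℝ :=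
  (Hbar d H)ᵀ * blkProj (fun k => bearingOf (edgeVec H p k)) * Hbar d H

/-- `U = 1_n ⊗ I_d`. -/
noncomputable def Umat (n d : ℕ) : Matrix (Fin n × Fin d) (Fin d) ℝ :=
  Matrix.of fun p j => if p.2 = j then 1 else 0

/-!
For `x ∈ ℝ^{dn}` put `w = H̄ x`, with blocks `w_k ∈ ℝ^d`. Then `xᵀ L x = Σ_k ‖w_k‖²` and
`xᵀ L_B(τ) x = Σ_k w_kᵀ π_{g_k(τ)} w_k`. For a tree `H` has full row rank, so `H̄` is onto and `w`
ranges over all of `ℝ^{dm}`: BPE says that the block-diagonal family `blkdiag(π_{g_k})` is PE.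
Choosing `w` supported on a single edge gives PE of each bearing; conversely, since every `π_{g_k}`
is positive semidefinite, a window and a gain that work for every bearing work for the sum.
-/

section PersistentExcitation

variable {ι : Type*} [Fintype ι]

/-- `∫_t^{t+T} S ≥ μ Q` in the Loewner order, uniformly in `t`: PE is the case `Q = 1`, and BPE
of a formation is the case `S = L_B`, `Q = L`. -/
def IsPersistentlyExcitingWrt (S : ℝ → Matrix ι ι ℝ) (Q : Matrix ι ι ℝ) : Prop :=
  ∃ T > (0 : ℝ), ∃ μ > (0 : ℝ), ∀ t : ℝ, ∀ x : ι → ℝ,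
    μ * (x ⬝ᵥ Q.mulVec x) ≤ x ⬝ᵥ (Matrix.of fun a b => ∫ τ in t..(t + T), S τ a b).mulVec x

lemma dotProduct_mulVec_eq_sum (M : Matrix ι ι ℝ) (x : ι → ℝ) :
    x ⬝ᵥ M *ᵥ x = ∑ a, ∑ b, x a * x b * M a b := by
  simp only [dotProduct, mulVec, Finset.mul_sum]
  exact Finset.sum_congr rfl fun _ _ => Finset.sum_congr rfl fun _ _ => by ring

lemma dotProduct_mulVec_intervalIntegral {S : ℝ → Matrix ι ι ℝ} (hS : Continuous S)
    (x : ι → ℝ) (t s : ℝ) :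
    x ⬝ᵥ (Matrix.of fun a b => ∫ τ in t..s, S τ a b) *ᵥ x = ∫ τ in t..s, x ⬝ᵥ S τ *ᵥ x := by
  have hint : ∀ a b, IntervalIntegrable (fun τ => x a * x b * S τ a b) volume t s :=
    fun a b => (continuous_const.mul (hS.matrix_elem a b)).intervalIntegrable _ _
  simp only [dotProduct_mulVec_eq_sum, of_apply]
  rw [intervalIntegral.integral_finsetSum fun a _ => by
    simpa only [← Finset.sum_fn] using IntervalIntegrable.sum _ fun b _ => hint a b]
  refine Finset.sum_congr rfl fun a _ => ?_
  rw [intervalIntegral.integral_finsetSum fun b _ => hint a b]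
  simp only [intervalIntegral.integral_const_mul]

lemma isPersistentlyExcitingWrt_iff {S : ℝ → Matrix ι ι ℝ} (hS : Continuous S)
    (Q : Matrix ι ι ℝ) :
    IsPersistentlyExcitingWrt S Q ↔ ∃ T > (0 : ℝ), ∃ μ > (0 : ℝ), ∀ t : ℝ, ∀ x : ι → ℝ,
      μ * (x ⬝ᵥ Q *ᵥ x) ≤ ∫ τ in t..(t + T), x ⬝ᵥ S τ *ᵥ x := by
  simp only [IsPersistentlyExcitingWrt, dotProduct_mulVec_intervalIntegral hS]

lemma isPersistentlyExcitingWrt_conj_iff {κ : Type*} [Fintype κ] {A : Matrix κ ι ℝ}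
    (hA : Function.Surjective A.mulVec) {S : ℝ → Matrix κ κ ℝ} (hS : Continuous S)
    (Q : Matrix κ κ ℝ) :
    IsPersistentlyExcitingWrt (fun τ => Aᵀ * S τ * A) (Aᵀ * Q * A) ↔
      IsPersistentlyExcitingWrt S Q := by
  have hconj : ∀ (M : Matrix κ κ ℝ) x, x ⬝ᵥ (Aᵀ * M * A) *ᵥ x = A *ᵥ x ⬝ᵥ M *ᵥ (A *ᵥ x) :=
    fun M x => by
      rw [← mulVec_mulVec, ← mulVec_mulVec, dotProduct_mulVec, vecMul_transpose]
  rw [isPersistentlyExcitingWrt_iff ((continuous_const.matrix_mul hS).matrix_mul continuous_const),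
    isPersistentlyExcitingWrt_iff hS]
  simp only [hconj, hA.forall]

lemma exists_le_integral_sum_iff {E : Type*} [Zero E] [DecidableEq ι]
    (q : ι → ℝ → E → ℝ) (N : E → ℝ) (hq : ∀ k τ x, 0 ≤ q k τ x) (hq0 : ∀ k τ, q k τ 0 = 0)
    (hqc : ∀ k x, Continuous (q k · x)) (hN : ∀ x, 0 ≤ N x) (hN0 : N 0 = 0) :
    (∃ T > (0 : ℝ), ∃ μ > (0 : ℝ), ∀ t : ℝ, ∀ w : ι → E,
      μ * ∑ k, N (w k) ≤ ∫ τ in t..(t + T), ∑ k, q k τ (w k)) ↔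
    ∀ k, ∃ T > (0 : ℝ), ∃ μ > (0 : ℝ), ∀ t : ℝ, ∀ x : E,
      μ * N x ≤ ∫ τ in t..(t + T), q k τ x := by
  constructor
  · rintro ⟨T, hT, μ, hμ, hPE⟩ k
    refine ⟨T, hT, μ, hμ, fun t x => ?_⟩
    have hsingle : ∀ f : ι → E → ℝ, (∀ j, f j 0 = 0) →
        ∑ j, f j ((Pi.single k x : ι → E) j) = f k x := fun f hf => by
        rw [Finset.sum_eq_single k (fun j _ hj => by rw [Pi.single_eq_of_ne hj, hf])
          (by simp), Pi.single_eq_same]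
    simpa only [hsingle _ (fun _ => hN0), hsingle _ (hq0 · _)] using hPE t (Pi.single k x : ι → E)
  · intro h
    choose T hT μ hμ hPE using h
    -- the integrands are nonnegative, so one window `T₀ ≥ T k` and one gain `μ₀ ≤ μ k` fit all `k`
    set T₀ := 1 + ∑ k, T k
    set μ₀ := (1 + ∑ k, (μ k)⁻¹)⁻¹
    have hT₀ : ∀ k, T k ≤ T₀ := fun k => by
      have := Finset.single_le_sum (fun j _ => (hT j).le) (Finset.mem_univ k); linarith
    have hμinv : ∀ k, (μ k)⁻¹ ≤ ∑ j, (μ j)⁻¹ := fun k =>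
      Finset.single_le_sum (fun j _ => (inv_pos.2 (hμ j)).le) (Finset.mem_univ k)
    have hTsum : 0 ≤ ∑ k, T k := Finset.sum_nonneg fun k _ => (hT k).le
    have hμsum : 0 ≤ ∑ k, (μ k)⁻¹ := Finset.sum_nonneg fun k _ => (inv_pos.2 (hμ k)).le
    have hμ₀le : ∀ k, μ₀ ≤ μ k := fun k => inv_le_of_inv_le₀ (hμ k) (by linarith [hμinv k])
    refine ⟨T₀, by linarith, μ₀, inv_pos.2 (by linarith), fun t w => ?_⟩
    rw [intervalIntegral.integral_finsetSum fun k _ => (hqc k (w k)).intervalIntegrable _ _,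
      Finset.mul_sum]
    refine Finset.sum_le_sum fun k _ => ?_
    calc μ₀ * N (w k) ≤ μ k * N (w k) := mul_le_mul_of_nonneg_right (hμ₀le k) (hN _)
      _ ≤ ∫ τ in t..(t + T k), q k τ (w k) := hPE k t (w k)
      _ ≤ ∫ τ in t..(t + T₀), q k τ (w k) :=
        intervalIntegral.integral_mono_interval le_rfl (by linarith [hT k]) (by linarith [hT₀ k])
          (Filter.Eventually.of_forall fun τ => hq k τ (w k))
          ((hqc k (w k)).intervalIntegrable _ _)

end PersistentExcitation

section Bearing

variable {d : ℕ}

lemma dotProduct_proj_mulVec (y x : Fin d → ℝ) :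
    x ⬝ᵥ proj y *ᵥ x = x ⬝ᵥ x - (y ⬝ᵥ x) ^ 2 := by
  simp only [proj, sub_mulVec, one_mulVec, vecMulVec_mulVec, op_smul_eq_smul, dotProduct_sub,
    dotProduct_smul, smul_eq_mul, dotProduct_comm x y]
  ring

lemma dotProduct_proj_mulVec_nonneg {y : Fin d → ℝ} (hy : y ⬝ᵥ y = 1) (x : Fin d → ℝ) :
    0 ≤ x ⬝ᵥ proj y *ᵥ x := by
  have hcs : (y ⬝ᵥ x) ^ 2 ≤ (y ⬝ᵥ y) * (x ⬝ᵥ x) := by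
    have h := Finset.sum_mul_sq_le_sq_mul_sq Finset.univ y x
    simp only [sq] at h ⊢
    exact h
  rw [hy, one_mul] at hcs
  rw [dotProduct_proj_mulVec]
  linarith

lemma enorm_pos_of_ne_zero {v : Fin d → ℝ} (hv : v ≠ 0) : 0 < _root_.enorm v :=
  Real.sqrt_pos.2 (by simpa using dotProduct_star_self_pos_iff.2 hv)

lemma dotProduct_bearingOf_self {v : Fin d → ℝ} (hv : v ≠ 0) :
    bearingOf v ⬝ᵥ bearingOf v = 1 := by
  have hsq : _root_.enorm v ^ 2 = v ⬝ᵥ v :=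
    Real.sq_sqrt (by simpa using dotProduct_star_self_nonneg v)
  simp only [bearingOf, dotProduct_smul, smul_dotProduct, smul_eq_mul, ← mul_assoc, ← sq, inv_pow,
    ← hsq]
  exact inv_mul_cancel₀ (pow_pos (enorm_pos_of_ne_zero hv) 2).ne'

lemma Continuous.bearingOf {X : Type*} [TopologicalSpace X] {f : X → Fin d → ℝ}
    (hf : Continuous f) (hf0 : ∀ x, f x ≠ 0) : Continuous fun x => bearingOf (f x) :=
  ((Real.continuous_sqrt.comp (hf.dotProduct hf)).inv₀
    fun x => (enorm_pos_of_ne_zero (hf0 x)).ne').smul hf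

lemma continuous_proj : Continuous (proj : (Fin d → ℝ) → Matrix (Fin d) (Fin d) ℝ) :=
  continuous_const.sub (continuous_id.matrix_vecMulVec continuous_id)

end Bearing

section BlockProjection

variable {m d : ℕ}

lemma dotProduct_blkProj_mulVec (g : Fin m → Fin d → ℝ) (y : Fin m × Fin d → ℝ) :
    y ⬝ᵥ blkProj g *ᵥ y = ∑ k, Function.curry y k ⬝ᵥ proj (g k) *ᵥ Function.curry y k := by
  simp only [dotProduct, mulVec, blkProj, Matrix.of_apply, Fintype.sum_prod_type]
  refine Finset.sum_congr rfl fun k _ => Finset.sum_congr rfl fun i _ => ?_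
  simp [ite_mul, Function.curry]

lemma dotProduct_self_eq_sum_curry (y : Fin m × Fin d → ℝ) :
    y ⬝ᵥ y = ∑ k, Function.curry y k ⬝ᵥ Function.curry y k :=
  Fintype.sum_prod_type _

lemma Continuous.blkProj {g : ℝ → Fin m → Fin d → ℝ} (hg : Continuous g) :
    Continuous fun τ => blkProj (g τ) := by
  refine continuous_pi fun a => continuous_pi fun b => ?_
  by_cases h : a.1 = b.1
  · simp only [_root_.blkProj, of_apply, h, if_true]
    exact (continuous_proj.comp ((continuous_apply _).comp hg)).matrix_elem _ _
  · simp only [_root_.blkProj, of_apply, h, if_false]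
    exact continuous_const

lemma isPersistentlyExcitingWrt_blkProj_iff {g : ℝ → Fin m → Fin d → ℝ} (hg : Continuous g)
    (hunit : ∀ τ k, g τ k ⬝ᵥ g τ k = 1) :
    IsPersistentlyExcitingWrt (fun τ => blkProj (g τ)) 1 ↔
      ∀ k, IsPersistentlyExcitingWrt (fun τ => proj (g τ k)) 1 := by
  have hgk : ∀ k, Continuous fun τ => g τ k := fun k => (continuous_apply k).comp hg
  have hq : ∀ k x, Continuous fun τ => x ⬝ᵥ proj (g τ k) *ᵥ x := fun k x =>
    continuous_const.dotProduct (((continuous_proj.comp (hgk k))).matrix_mulVec continuous_const)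
  rw [isPersistentlyExcitingWrt_iff hg.blkProj,
    forall_congr' fun k =>
      isPersistentlyExcitingWrt_iff (S := fun τ => proj (g τ k)) (continuous_proj.comp (hgk k)) 1]
  simp only [one_mulVec, dotProduct_blkProj_mulVec, dotProduct_self_eq_sum_curry]
  refine Iff.trans ?_ (exists_le_integral_sum_iff (fun k τ x => x ⬝ᵥ proj (g τ k) *ᵥ x)
    (fun x => x ⬝ᵥ x) (fun k τ => dotProduct_proj_mulVec_nonneg (hunit τ k)) (by simp) hq
    (fun x => by simpa using dotProduct_star_self_nonneg x) (dotProduct_zero 0))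
  exact exists_congr fun T => and_congr_right fun _ => exists_congr fun μ => and_congr_right
    fun _ => forall_congr' fun t =>
      ⟨fun h w => (by simpa only [Function.curry_uncurry] using h (Function.uncurry w)),
        fun h x => h _⟩

end BlockProjection

lemma Matrix.mulVec_surjective_of_rank_eq {K m n : Type*} [Field K] [Fintype m] [Fintype n]
    {A : Matrix m n K} (hA : A.rank = Fintype.card m) : Function.Surjective A.mulVec := by
  have hrange : LinearMap.range A.mulVecLin = ⊤ :=
    Submodule.eq_top_of_finrank_eq (hA.trans (Module.finrank_fintype_fun_eq_card K).symm)
  exact LinearMap.range_eq_top.mp hrange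

lemma Hbar_mulVec_apply {m n d : ℕ} (H : Matrix (Fin m) (Fin n) ℝ) (z : Fin n × Fin d → ℝ)
    (k : Fin m) (i : Fin d) :
    (Hbar d H *ᵥ z) (k, i) = (H *ᵥ fun j => z (j, i)) k := by
  simp [Hbar, mulVec, dotProduct, Fintype.sum_prod_type, one_apply]

lemma Hbar_mulVec_surjective {m n : ℕ} (d : ℕ) {H : Matrix (Fin m) (Fin n) ℝ}
    (hH : Function.Surjective H.mulVec) : Function.Surjective (Hbar d H).mulVec := by
  intro y
  choose z hz using fun i : Fin d => hH fun k => y (k, i)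
  exact ⟨fun q => z q.2 q.1, funext fun q => by rw [Hbar_mulVec_apply, hz]⟩

lemma continuous_edgeVec {m n d : ℕ} (H : Matrix (Fin m) (Fin n) ℝ)
    {p : ℝ → Fin n × Fin d → ℝ} (hp : Continuous p) (k : Fin m) :
    Continuous fun τ => edgeVec H (p τ) k :=
  continuous_pi fun _ => (continuous_apply _).comp (continuous_const.matrix_mulVec hp)

theorem statement_7_general {d m n : ℕ}
    (H : Matrix (Fin m) (Fin n) ℝ)
    -- the graph is a tree: `m = n - 1` edges and the graph is connected
    (hn : n = m + 1) (hrank : H.rank = m)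
    (p : ℝ → Fin n × Fin d → ℝ) (hp : Continuous p)
    (hnz : ∀ t : ℝ, ∀ k : Fin m, edgeVec H (p t) k ≠ 0) :
    -- the formation is BPE: spanning tree plus `L_B(t)` PE w.r.t. `L`
    (H.rank = n - 1 ∧ ∃ T > (0 : ℝ), ∃ μ > (0 : ℝ), ∀ t : ℝ, ∀ x : Fin n × Fin d → ℝ,
        μ * (x ⬝ᵥ ((Hbar d H)ᵀ * Hbar d H).mulVec x) ≤
          x ⬝ᵥ (Matrix.of fun a b => ∫ τ in t..(t + T), LB H (p τ) a b).mulVec x) ↔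
    -- every bearing is PE
    (∀ k : Fin m, ∃ T > (0 : ℝ), ∃ μ > (0 : ℝ), ∀ t : ℝ, ∀ x : Fin d → ℝ,
        μ * (x ⬝ᵥ x) ≤
          x ⬝ᵥ (Matrix.of fun i j =>
            ∫ τ in t..(t + T), proj (bearingOf (edgeVec H (p τ) k)) i j).mulVec x) := by
  set g : ℝ → Fin m → Fin d → ℝ := fun τ k => bearingOf (edgeVec H (p τ) k)
  have hg : Continuous g := continuous_pi fun k => (continuous_edgeVec H hp k).bearingOf (hnz · k)
  have hHbar : Function.Surjective (Hbar d H).mulVec :=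
    Hbar_mulVec_surjective d (Matrix.mulVec_surjective_of_rank_eq (by simpa using hrank))
  have hiff := (isPersistentlyExcitingWrt_conj_iff hHbar hg.blkProj 1).trans
    (isPersistentlyExcitingWrt_blkProj_iff hg fun τ k => dotProduct_bearingOf_self (hnz τ k))
  simp only [Matrix.mul_one, IsPersistentlyExcitingWrt, one_mulVec] at hiff
  exact (and_iff_right (by omega)).trans hiff

/-- for a formation over a tree (acyclic with a spanning tree, so
`m = n - 1` and `rank H = n - 1`), the formation is bearing persistently exciting if
and only if every bearing `g_k(t)`, `k ∈ {1,…,n-1}`, is persistently exciting. -/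
theorem statement_7 {d m n : ℕ} (hd : 2 ≤ d)
    (H : Matrix (Fin m) (Fin n) ℝ) (hH : IsIncidence H)
    -- the graph is a tree: `m = n - 1` edges and the graph is connected
    (hn : n = m + 1) (hrank : H.rank = m)
    (p : ℝ → Fin n × Fin d → ℝ) (hp : Continuous p)
    (hnz : ∀ t : ℝ, ∀ k : Fin m, edgeVec H (p t) k ≠ 0) :
    -- the formation is BPE: spanning tree plus `L_B(t)` PE w.r.t. `L`
    (H.rank = n - 1 ∧ ∃ T > (0 : ℝ), ∃ μ > (0 : ℝ), ∀ t : ℝ, ∀ x : Fin n × Fin d → ℝ,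
        μ * (x ⬝ᵥ ((Hbar d H)ᵀ * Hbar d H).mulVec x) ≤
          x ⬝ᵥ (Matrix.of fun a b => ∫ τ in t..(t + T), LB H (p τ) a b).mulVec x) ↔
    -- every bearing is PE
    (∀ k : Fin m, ∃ T > (0 : ℝ), ∃ μ > (0 : ℝ), ∀ t : ℝ, ∀ x : Fin d → ℝ,
        μ * (x ⬝ᵥ x) ≤
          x ⬝ᵥ (Matrix.of fun i j =>
            ∫ τ in t..(t + T), proj (bearingOf (edgeVec H (p τ) k)) i j).mulVec x) :=
  statement_7_general H hn hrank p hp hnz
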